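/- If f_n depends only on the n-th coordinate of a finite product probability space X = ∏_{n=1}^N X_n and G_n is a sub-σ-algebra of F_n, then the conditional expectation of f_n with respect to the σ-algebra lifted from G_n equals the conditional expectation of f_n with respect to the product σ-algebra G_1 × G_2 × ⋯ × G_N. -/

import Mathlib

/-!
The coordinate σ-algebras of a product of probability spaces are independent, so the claim is an
instance of the following: if `f` and `m₁` are `m₀`-measurable and `m₂` is independent of `m₀`,
then `μ[f | m₁ ⊔ m₂] = μ[f | m₁]`. Indeed, for `a ∈ m₁` and `b ∈ m₂`, independence gives
`∫_{a ∩ b} μ[f | m₁] = μ b • ∫_a μ[f | m₁] = μ b • ∫_a f = ∫_{a ∩ b} f`, and the sets `a ∩ b`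
form a π-system generating `m₁ ⊔ m₂`, so Dynkin's π-λ theorem extends the equality of set
integrals to all of `m₁ ⊔ m₂`.
-/

open MeasureTheory Set ProbabilityTheory

lemma IsPiSystem.image2_inter {α : Type*} {C D : Set (Set α)} (hC : IsPiSystem C)
    (hD : IsPiSystem D) : IsPiSystem (image2 (· ∩ ·) C D) := by
  rintro _ ⟨a₁, ha₁, b₁, hb₁, rfl⟩ _ ⟨a₂, ha₂, b₂, hb₂, rfl⟩ hne
  rw [inter_inter_inter_comm] at hne ⊢
  exact mem_image2_of_mem (hC _ ha₁ _ ha₂ hne.left) (hD _ hb₁ _ hb₂ hne.right)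

lemma MeasurableSpace.generateFrom_image2_inter {α : Type*} (m₁ m₂ : MeasurableSpace α) :
    generateFrom (image2 (· ∩ ·) {s | MeasurableSet[m₁] s} {t | MeasurableSet[m₂] t})
      = m₁ ⊔ m₂ := by
  refine le_antisymm (generateFrom_le ?_) (sup_le ?_ ?_)
  · rintro _ ⟨a, ha, b, hb, rfl⟩
    exact (le_sup_left (b := m₂) a ha).inter (le_sup_right (a := m₁) b hb)
  · exact fun a ha => measurableSet_generateFrom ⟨a, ha, univ, MeasurableSet.univ, inter_univ a⟩
  · exact fun b hb => measurableSet_generateFrom ⟨univ, MeasurableSet.univ, b, hb, univ_inter b⟩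

section

variable {Ω E : Type*} [NormedAddCommGroup E] [NormedSpace ℝ E] {m : MeasurableSpace Ω}
  {μ : Measure Ω}

lemma setIntegral_eq_of_isPiSystem {C : Set (Set Ω)} (hC : IsPiSystem C)
    (hCm : ∀ s ∈ C, MeasurableSet s) {f g : Ω → E} (hf : Integrable f μ) (hg : Integrable g μ)
    (h_univ : ∫ x, f x ∂μ = ∫ x, g x ∂μ) (hC_eq : ∀ s ∈ C, ∫ x in s, f x ∂μ = ∫ x in s, g x ∂μ)
    {s : Set Ω} (hs : MeasurableSet[MeasurableSpace.generateFrom C] s) :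
    ∫ x in s, f x ∂μ = ∫ x in s, g x ∂μ := by
  have hle : MeasurableSpace.generateFrom C ≤ m := MeasurableSpace.generateFrom_le hCm
  induction s, hs using MeasurableSpace.induction_on_inter rfl hC with
  | empty => simp
  | basic s hs => exact hC_eq s hs
  | compl s hs ih =>
    rw [eq_sub_of_add_eq' (integral_add_compl (hle s hs) hf),
      eq_sub_of_add_eq' (integral_add_compl (hle s hs) hg), h_univ, ih]
  | iUnion s hdisj hs ih =>
    rw [integral_iUnion (fun i => hle _ (hs i)) hdisj hf.integrableOn,
      integral_iUnion (fun i => hle _ (hs i)) hdisj hg.integrableOn]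
    exact tsum_congr ih

variable [CompleteSpace E] {m₀ m₁ m₂ : MeasurableSpace Ω} [IsFiniteMeasure μ]

lemma setIntegral_eq_measureReal_smul_integral_of_indep (hle₀ : m₀ ≤ m) (hle₂ : m₂ ≤ m)
    (hindep : Indep m₀ m₂ μ) {h : Ω → E} (hhm : StronglyMeasurable[m₀] h)
    (hhi : Integrable h μ) {s : Set Ω} (hs : MeasurableSet[m₂] s) :
    ∫ x in s, h x ∂μ = μ.real s • ∫ x, h x ∂μ := by
  calc ∫ x in s, h x ∂μ = ∫ x in s, (μ[h | m₂]) x ∂μ := (setIntegral_condExp hle₂ hhi hs).symm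
    _ = ∫ x in s, (∫ y, h y ∂μ) ∂μ :=
        setIntegral_congr_ae (hle₂ s hs) ((condExp_indep_eq hle₀ hle₂ hhm hindep).mono
          fun x hx _ => hx)
    _ = μ.real s • ∫ x, h x ∂μ := setIntegral_const _

theorem condExp_sup_indep_eq (hle₀ : m₀ ≤ m) (h₁₀ : m₁ ≤ m₀) (hle₂ : m₂ ≤ m)
    (hindep : Indep m₀ m₂ μ) {f : Ω → E} (hfm : AEStronglyMeasurable[m₀] f μ)
    (hfi : Integrable f μ) :
    μ[f | m₁ ⊔ m₂] =ᵐ[μ] μ[f | m₁] := by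
  obtain ⟨f', hf'm, hff'⟩ := hfm
  refine (condExp_congr_ae hff').trans (Filter.EventuallyEq.trans ?_ (condExp_congr_ae hff'.symm))
  replace hfi := hfi.congr hff'
  have hle₁ : m₁ ≤ m := h₁₀.trans hle₀
  have hgm : StronglyMeasurable[m₁] (μ[f' | m₁]) := stronglyMeasurable_condExp
  refine (ae_eq_condExp_of_forall_setIntegral_eq (sup_le hle₁ hle₂) hfi
    (fun s _ _ => integrable_condExp.integrableOn) (fun s hs _ => ?_)
    (hgm.mono le_sup_left).aestronglyMeasurable).symm
  rw [← MeasurableSpace.generateFrom_image2_inter] at hs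
  refine setIntegral_eq_of_isPiSystem
    (.image2_inter (@MeasurableSpace.isPiSystem_measurableSet _ m₁)
      (@MeasurableSpace.isPiSystem_measurableSet _ m₂))
    ?_ integrable_condExp hfi (integral_condExp hle₁) ?_ hs
  · rintro _ ⟨a, ha, b, hb, rfl⟩
    exact (hle₁ a ha).inter (hle₂ b hb)
  · rintro _ ⟨a, ha, b, hb, rfl⟩
    have ha₀ : MeasurableSet[m₀] a := h₁₀ a ha
    dsimp only
    rw [inter_comm, ← setIntegral_indicator (hle₁ a ha), ← setIntegral_indicator (hle₁ a ha),
      setIntegral_eq_measureReal_smul_integral_of_indep hle₀ hle₂ hindep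
        ((hgm.mono h₁₀).indicator ha₀) (integrable_condExp.indicator (hle₁ a ha)) hb,
      setIntegral_eq_measureReal_smul_integral_of_indep hle₀ hle₂ hindep
        (hf'm.indicator ha₀) (hfi.indicator (hle₁ a ha)) hb,
      integral_indicator (hle₁ a ha), integral_indicator (hle₁ a ha),
      setIntegral_condExp hle₁ hfi ha]

end

lemma AEStronglyMeasurable.comap_comp {α β γ : Type*} [TopologicalSpace γ]
    {mα : MeasurableSpace α} {mβ : MeasurableSpace β} {μ : Measure α} {ν : Measure β}
    {φ : α → β} (hφ : Measure.QuasiMeasurePreserving φ μ ν) {g : β → γ}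
    (hg : AEStronglyMeasurable g ν) : AEStronglyMeasurable[mβ.comap φ] (g ∘ φ) μ :=
  ⟨hg.mk g ∘ φ, hg.stronglyMeasurable_mk.comp_measurable (comap_measurable φ),
    hφ.ae_eq_comp hg.ae_eq_mk⟩

section Pi

variable {ι : Type*} [Fintype ι] {X : ι → Type*} [mX : ∀ i, MeasurableSpace (X i)]
  (μ : ∀ i, Measure (X i)) [∀ i, IsProbabilityMeasure (μ i)]

lemma iIndep_comap_eval :
    iIndep (fun i => (mX i).comap fun x : ∀ i, X i => x i) (Measure.pi μ) :=
  (iIndepFun_iff_iIndep mX _ _).mp (iIndepFun_pi (X := fun _ => id) fun _ => aemeasurable_id)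

lemma AEStronglyMeasurable.of_comp_eval {γ : Type*} [TopologicalSpace γ] {i : ι} {f : X i → γ}
    (hf : AEStronglyMeasurable (fun x : ∀ i, X i => f (x i)) (Measure.pi μ)) :
    AEStronglyMeasurable f (μ i) := by
  classical
  let : Unique {j // ¬j ≠ i} := ⟨⟨⟨i, not_not_intro rfl⟩⟩, fun j => Subtype.ext (not_not.mp j.2)⟩
  let ψ : (∀ j, X j) ≃ᵐ (∀ j : {j // j ≠ i}, X j) × X i :=
    (MeasurableEquiv.piEquivPiSubtypeProd X (· ≠ i)).trans
      ((MeasurableEquiv.refl _).prodCongr (MeasurableEquiv.piUnique fun j : {j // ¬j ≠ i} => X j))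
  have hψ : MeasurePreserving ψ (Measure.pi μ)
      ((Measure.pi fun j : {j // j ≠ i} => μ j).prod (μ i)) :=
    ((MeasurePreserving.id _).prod (measurePreserving_piUnique fun j : {j // ¬j ≠ i} => μ j)).comp
      (measurePreserving_piEquivPiSubtypeProd μ (· ≠ i))
  have hfψ : AEStronglyMeasurable ((fun z => f z.2) ∘ ψ) (Measure.pi μ) := hf
  exact ((hψ.aestronglyMeasurable_comp_iff ψ.measurableEmbedding).mp hfψ).of_comp_snd
    (IsProbabilityMeasure.ne_zero _)

end Pi

/-- If `f` depends only on the `n₀`-th coordinate of a finite product probability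
space and `G n` is a sub-σ-algebra of the `n`-th factor `F n`, then the conditional
expectation of `f` with respect to the σ-algebra lifted from `G n₀` coincides
(a.e.) with the conditional expectation with respect to the full product
σ-algebra `G 1 × ⋯ × G N`. -/
theorem condexp_coordinate_eq_condexp_pi
    {N : ℕ} {X : Fin N → Type*} (G : ∀ n, MeasurableSpace (X n))
    [mX : ∀ n, MeasurableSpace (X n)]
    (μ : ∀ n, Measure (X n)) [∀ n, IsProbabilityMeasure (μ n)]
    {E : Type*} [NormedAddCommGroup E] [NormedSpace ℝ E] [CompleteSpace E]
    (hG : ∀ n, G n ≤ mX n)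
    (n₀ : Fin N) (f : X n₀ → E)
    (hf : Integrable (fun x : ∀ n, X n => f (x n₀)) (Measure.pi μ)) :
    (Measure.pi μ)[(fun x : ∀ n, X n => f (x n₀)) | (G n₀).comap (fun x => x n₀)]
      =ᵐ[Measure.pi μ]
    (Measure.pi μ)[(fun x : ∀ n, X n => f (x n₀)) |
      ⨆ n : Fin N, (G n).comap (fun x : ∀ n, X n => x n)] := by
  set M : Fin N → MeasurableSpace (∀ n, X n) := fun n => (mX n).comap fun x => x n
  have hM : ∀ n, M n ≤ MeasurableSpace.pi := fun n => (measurable_pi_apply n).comap_le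
  have hGM : ∀ n, (G n).comap (fun x : ∀ n, X n => x n) ≤ M n :=
    fun n => MeasurableSpace.comap_mono (hG n)
  have hindep : Indep (M n₀) (⨆ (n) (_ : n ≠ n₀), M n) (Measure.pi μ) := by
    simpa using indep_iSup_of_disjoint hM (iIndep_comap_eval μ)
      (disjoint_compl_right (a := ({n₀} : Set (Fin N))))
  have hfm : AEStronglyMeasurable[M n₀] (fun x : ∀ n, X n => f (x n₀)) (Measure.pi μ) :=
    AEStronglyMeasurable.comap_comp (measurePreserving_eval μ n₀).quasiMeasurePreserving
      (AEStronglyMeasurable.of_comp_eval μ hf.aestronglyMeasurable)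
  rw [iSup_split_single _ n₀]
  exact (condExp_sup_indep_eq (hM n₀) (hGM n₀)
    ((iSup₂_mono fun n _ => hGM n).trans (iSup₂_le fun n _ => hM n))
    (indep_of_indep_of_le_right hindep (iSup₂_mono fun n _ => hGM n)) hfm hf).symm
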